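/- Let J be a probability space with measure μ and let f, g : ℝ × ℝ → ℝ be Lipschitz continuous with respect to the ℓ¹-norm with constants K_f and K_g respectively. Let W : J × J → [0,1] be measurable. Then the operator F on L¹(J) defined by F(u)(x) = f(u(x), ∫ W(x,y) g(u(x), u(y)) dμ(y)) is Lipschitz continuous with constant K_f + 2 K_f K_g with respect to the L¹ norm. -/

import Mathlib

open MeasureTheory

/-! The inner integrals of `F u` and `F v` at `x` differ by at most
`K_g |u x - v x| + K_g ‖u - v‖₁`, because `|W| ≤ 1` and `g` is `ℓ¹`-Lipschitz.
Feeding this into the `ℓ¹`-Lipschitz bound for `f` gives the pointwise estimate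
`|F u x - F v x| ≤ K_f (1 + K_g) |u x - v x| + K_f K_g ‖u - v‖₁`, and integrating it
over the probability space `μ` gives the constant `K_f + 2 K_f K_g`. -/

def IsL1Lipschitz (K : ℝ) (f : ℝ → ℝ → ℝ) : Prop :=
  ∀ x₁ y₁ x₂ y₂ : ℝ, |f x₁ y₁ - f x₂ y₂| ≤ K * (|x₁ - x₂| + |y₁ - y₂|)

namespace IsL1Lipschitz

variable {K : ℝ} {f : ℝ → ℝ → ℝ}

theorem nonneg (hf : IsL1Lipschitz K f) : 0 ≤ K := by
  have h := hf 1 0 0 0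
  norm_num at h
  linarith [abs_nonneg (f 1 0 - f 0 0)]

theorem lipschitzWith_right (hf : IsL1Lipschitz K f) (a : ℝ) :
    LipschitzWith (Real.toNNReal K) (f a) :=
  LipschitzWith.of_dist_le_mul fun y₁ y₂ => by
    simpa [Real.coe_toNNReal _ hf.nonneg, Real.dist_eq] using hf a y₁ a y₂

end IsL1Lipschitz

section Integrals

variable {Ω : Type*} [MeasurableSpace Ω] {μ : Measure Ω}

theorem LipschitzWith.integrable_comp {E F : Type*} [NormedAddCommGroup E]
    [NormedAddCommGroup F] [IsFiniteMeasure μ] {K : NNReal} {φ : E → F}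
    (hφ : LipschitzWith K φ) {w : Ω → E} (hw : Integrable w μ) :
    Integrable (fun y => φ (w y)) μ := by
  refine ((integrable_const ‖φ 0‖).add (hw.norm.const_mul K)).mono'
    (hφ.continuous.comp_aestronglyMeasurable hw.1) (ae_of_all _ fun y => ?_)
  show ‖φ (w y)‖ ≤ ‖φ 0‖ + K * ‖w y‖
  have h := hφ.norm_sub_le (w y) 0
  rw [sub_zero] at h
  linarith [norm_le_norm_add_norm_sub' (φ (w y)) (φ 0)]

theorem IsL1Lipschitz.integrable_bdd_mul_comp [IsFiniteMeasure μ] {K : ℝ} {g : ℝ → ℝ → ℝ}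
    (hg : IsL1Lipschitz K g) {k : Ω → ℝ} (hk : AEStronglyMeasurable k μ)
    (hk1 : ∀ y, |k y| ≤ 1) (a : ℝ) {w : Ω → ℝ} (hw : Integrable w μ) :
    Integrable (fun y => k y * g a (w y)) μ :=
  ((hg.lipschitzWith_right a).integrable_comp hw).bdd_mul hk (ae_of_all _ hk1)

theorem IsL1Lipschitz.abs_integral_bdd_mul_sub_le [IsProbabilityMeasure μ] {K : ℝ} {g : ℝ → ℝ → ℝ}
    (hg : IsL1Lipschitz K g) {k : Ω → ℝ} (hk : AEStronglyMeasurable k μ)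
    (hk1 : ∀ y, |k y| ≤ 1) (a b : ℝ) {u v : Ω → ℝ} (hu : Integrable u μ)
    (hv : Integrable v μ) :
    |(∫ y, k y * g a (u y) ∂μ) - ∫ y, k y * g b (v y) ∂μ|
      ≤ K * |a - b| + K * ∫ y, |u y - v y| ∂μ := by
  have hKu := hg.integrable_bdd_mul_comp hk hk1 a hu
  have hKv := hg.integrable_bdd_mul_comp hk hk1 b hv
  have huv : Integrable (fun y => |u y - v y|) μ := (hu.sub hv).abs
  have hpt : ∀ y, |k y * g a (u y) - k y * g b (v y)| ≤ K * |a - b| + K * |u y - v y| :=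
    fun y => calc
      |k y * g a (u y) - k y * g b (v y)| = |k y| * |g a (u y) - g b (v y)| := by
        rw [← mul_sub, abs_mul]
      _ ≤ 1 * (K * (|a - b| + |u y - v y|)) :=
        mul_le_mul (hk1 y) (hg _ _ _ _) (abs_nonneg _) zero_le_one
      _ = K * |a - b| + K * |u y - v y| := by ring
  calc |(∫ y, k y * g a (u y) ∂μ) - ∫ y, k y * g b (v y) ∂μ|
      = |∫ y, (k y * g a (u y) - k y * g b (v y)) ∂μ| := by rw [integral_sub hKu hKv]
    _ ≤ ∫ y, |k y * g a (u y) - k y * g b (v y)| ∂μ := abs_integral_le_integral_abs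
    _ ≤ ∫ y, (K * |a - b| + K * |u y - v y|) ∂μ :=
      integral_mono (hKu.sub hKv).abs ((integrable_const _).add (huv.const_mul K)) hpt
    _ = K * |a - b| + K * ∫ y, |u y - v y| ∂μ := by
      rw [integral_add (integrable_const _) (huv.const_mul K), integral_const,
        integral_const_mul, probReal_univ, one_smul]

theorem integral_le_of_le_mul_add [IsProbabilityMeasure μ] {φ ψ : Ω → ℝ}
    (hφ : ∀ x, 0 ≤ φ x) (hψ : Integrable ψ μ) (a b : ℝ) (h : ∀ x, φ x ≤ a * ψ x + b) :
    ∫ x, φ x ∂μ ≤ a * (∫ x, ψ x ∂μ) + b := by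
  calc ∫ x, φ x ∂μ ≤ ∫ x, (a * ψ x + b) ∂μ :=
        integral_mono_of_nonneg (ae_of_all _ hφ) ((hψ.const_mul a).add (integrable_const b))
          (ae_of_all _ h)
    _ = a * (∫ x, ψ x ∂μ) + b := by
      rw [integral_add (hψ.const_mul a) (integrable_const b), integral_const_mul,
        integral_const, probReal_univ, one_smul]

end Integrals

theorem graphon_vector_field_lipschitz_general {Ω : Type*} [MeasurableSpace Ω]
    (μ : Measure Ω) [IsProbabilityMeasure μ]
    (f g : ℝ → ℝ → ℝ) (Kf Kg : ℝ)
    (hf : ∀ x₁ y₁ x₂ y₂ : ℝ, |f x₁ y₁ - f x₂ y₂| ≤ Kf * (|x₁ - x₂| + |y₁ - y₂|))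
    (hg : ∀ x₁ y₁ x₂ y₂ : ℝ, |g x₁ y₁ - g x₂ y₂| ≤ Kg * (|x₁ - x₂| + |y₁ - y₂|))
    (W : Ω → Ω → ℝ)
    (hWmeas : Measurable (fun p : Ω × Ω => W p.1 p.2))
    (hW01 : ∀ x y, W x y ∈ Set.Icc (0 : ℝ) 1)
    (u v : Ω → ℝ) (hu : Integrable u μ) (hv : Integrable v μ) :
    ∫ x, |f (u x) (∫ y, W x y * g (u x) (u y) ∂μ)
          - f (v x) (∫ y, W x y * g (v x) (v y) ∂μ)| ∂μ
      ≤ (Kf + 2 * Kf * Kg) * ∫ x, |u x - v x| ∂μ := by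
  set C := ∫ x, |u x - v x| ∂μ
  have hW1 : ∀ x y, |W x y| ≤ 1 := fun x y =>
    abs_le.2 ⟨by linarith [(hW01 x y).1], (hW01 x y).2⟩
  have hinner : ∀ x, |(∫ y, W x y * g (u x) (u y) ∂μ) - ∫ y, W x y * g (v x) (v y) ∂μ|
      ≤ Kg * |u x - v x| + Kg * C := fun x =>
    IsL1Lipschitz.abs_integral_bdd_mul_sub_le hg
      (hWmeas.comp measurable_prodMk_left).aestronglyMeasurable (hW1 x) (u x) (v x) hu hv
  have hpt : ∀ x, |f (u x) (∫ y, W x y * g (u x) (u y) ∂μ)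
      - f (v x) (∫ y, W x y * g (v x) (v y) ∂μ)| ≤ Kf * (1 + Kg) * |u x - v x| + Kf * Kg * C :=
    fun x => by
      have hKf_inner := mul_le_mul_of_nonneg_left (hinner x) (IsL1Lipschitz.nonneg hf)
      linarith [hf (u x) (∫ y, W x y * g (u x) (u y) ∂μ) (v x) (∫ y, W x y * g (v x) (v y) ∂μ)]
  have huv : Integrable (fun x => |u x - v x|) μ := (hu.sub hv).abs
  have hint := integral_le_of_le_mul_add (fun x => abs_nonneg _) huv _ _ hpt
  linarith

/-- The right hand side of the graphon dynamical system is Lipschitz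
continuous on `L¹` with constant `K_f + 2 K_f K_g`. -/
theorem graphon_vector_field_lipschitz {Ω : Type*} [MeasurableSpace Ω]
    (μ : Measure Ω) [IsProbabilityMeasure μ]
    (f g : ℝ → ℝ → ℝ) (Kf Kg : ℝ)
    (hf : ∀ x₁ y₁ x₂ y₂ : ℝ, |f x₁ y₁ - f x₂ y₂| ≤ Kf * (|x₁ - x₂| + |y₁ - y₂|))
    (hg : ∀ x₁ y₁ x₂ y₂ : ℝ, |g x₁ y₁ - g x₂ y₂| ≤ Kg * (|x₁ - x₂| + |y₁ - y₂|))
    (W : Ω → Ω → ℝ)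
    (hWmeas : Measurable (fun p : Ω × Ω => W p.1 p.2))
    (hWsymm : ∀ x y, W x y = W y x)
    (hW01 : ∀ x y, W x y ∈ Set.Icc (0 : ℝ) 1)
    (u v : Ω → ℝ) (hu : Integrable u μ) (hv : Integrable v μ)
    (hFu : Integrable (fun x => f (u x) (∫ y, W x y * g (u x) (u y) ∂μ)) μ)
    (hFv : Integrable (fun x => f (v x) (∫ y, W x y * g (v x) (v y) ∂μ)) μ) :
    ∫ x, |f (u x) (∫ y, W x y * g (u x) (u y) ∂μ)
          - f (v x) (∫ y, W x y * g (v x) (v y) ∂μ)| ∂μ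
      ≤ (Kf + 2 * Kf * Kg) * ∫ x, |u x - v x| ∂μ :=
  graphon_vector_field_lipschitz_general μ f g Kf Kg hf hg W hWmeas hW01 u v hu hv
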